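/- For n ≥ 1, the number of distinct frames of Dyck paths of length 2n is exactly 2^{n-1}. -/

import Mathlib

/-- A step of a Dyck path: `true` = up step (1,1), `false` = down step (1,-1). -/
def dstep (b : Bool) : ℤ := if b then 1 else -1

/-- Height of the path after its first `k` steps. -/
def dheight (p : List Bool) (k : ℕ) : ℤ := ((p.take k).map dstep).sum

/-- A Dyck path: ends at height 0 and never goes below the x-axis. -/
def IsDyck (p : List Bool) : Prop :=
  (p.map dstep).sum = 0 ∧ ∀ k, 0 ≤ dheight p k

/-- Number of lattice points of the path at level `l` (its "feet" at level `l`). -/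
def feet (p : List Bool) (l : ℤ) : ℕ :=
  ((List.range (p.length + 1)).map (dheight p)).count l

/-- The frame of a Dyck path: at position `k`, the number of its points at height `k`. -/
def frame (p : List Bool) : ℕ → ℕ := fun k => feet p (k : ℤ)

/-- `DyckFeet m l j` = number of Dyck paths of length `m` with exactly `j` points at level `l`. -/
noncomputable def DyckFeet (m : ℕ) (l : ℤ) (j : ℕ) : ℕ :=
  Set.ncard {p : List Bool | p.length = m ∧ IsDyck p ∧ feet p l = j}

/-- A sequence is admissible if it is the frame of some Dyck path. -/
def Admissible (I : ℕ → ℕ) : Prop := ∃ p : List Bool, IsDyck p ∧ frame p = I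

/-!
Let `u k` be the number of up steps of a Dyck path from height `k` to `k + 1`. A point at height
`k` is the start (if `k = 0`) or is entered by an up step from `k - 1` or a down step from `k + 1`,
and on a path returning to `0` the down steps from `k + 1` are exactly as many as the up steps
from `k`. Hence the frame is `i 0 = 1 + u 0`, `i (k + 1) = u k + u (k + 1)`, and it determines `u`.
A path that makes no up step from level `k` never rises above `k`, so the nonzero values of `u`
form an initial segment; they sum to the number `n` of up steps, i.e. they are the blocks of a
composition of `n`. Conversely the blocks `a :: t` are realised by `U P(t) D (UD)^(a-1)`, where
`P(t)` realises `t`. So frames correspond to the `2^(n-1)` compositions of `n`.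
-/

open Finset

@[simp] lemma dstep_true : dstep true = 1 := rfl

@[simp] lemma dstep_false : dstep false = -1 := rfl

lemma dheight_zero (p : List Bool) : dheight p 0 = 0 := by
  simp [dheight]

lemma dheight_of_length_le {p : List Bool} {k : ℕ} (h : p.length ≤ k) :
    dheight p k = (p.map dstep).sum := by
  simp [dheight, List.take_of_length_le h]

lemma dheight_append (s t : List Bool) (k : ℕ) :
    dheight (s ++ t) k = dheight s k + dheight t (k - s.length) := by
  simp [dheight, List.take_append]

lemma dheight_append_of_le {s : List Bool} (t : List Bool) {k : ℕ} (h : k ≤ s.length) :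
    dheight (s ++ t) k = dheight s k := by
  simp [dheight_append, Nat.sub_eq_zero_of_le h, dheight_zero]

lemma dheight_succ {p : List Bool} {k : ℕ} (h : k < p.length) :
    dheight p (k + 1) = dheight p k + dstep (p.getD k false) := by
  rw [dheight, dheight, List.take_add_one, List.getElem?_eq_getElem h, List.getD_eq_getElem _ _ h]
  simp only [List.map_append, List.sum_append, Option.toList_some, List.map_singleton, List.sum_singleton]

lemma dheight_cons_succ (c : Bool) (p : List Bool) (k : ℕ) :
    dheight (c :: p) (k + 1) = dstep c + dheight p k := by
  simp [dheight]

lemma dheight_le_self (p : List Bool) (k : ℕ) : dheight p k ≤ k := by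
  have h := List.sum_le_card_nsmul ((p.take k).map dstep) 1 (by
    simp only [List.mem_map]
    rintro _ ⟨b, -, rfl⟩
    cases b <;> simp)
  simp only [List.length_map, List.length_take, nsmul_eq_mul, mul_one] at h
  exact h.trans (by exact_mod_cast min_le_left _ _)

lemma sum_map_dstep (p : List Bool) :
    (p.map dstep).sum = p.count true - p.count false := by
  induction p with
  | nil => simp
  | cons b p ih => cases b <;> simp [ih] <;> ring

def stepCount (p : List Bool) (h : ℤ) (b : Bool) : ℕ :=
  (List.range p.length).countP fun i => dheight p i = h ∧ p.getD i false = b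

lemma stepCount_nil (h : ℤ) (b : Bool) : stepCount [] h b = 0 := rfl

lemma feet_nil (l : ℤ) : feet [] l = if l = 0 then 1 else 0 := by
  by_cases hl : l = 0 <;> simp [feet, dheight_zero, hl, eq_comm]

lemma feet_append_singleton (p : List Bool) (b : Bool) (l : ℤ) :
    feet (p ++ [b]) l = feet p l + if (p.map dstep).sum + dstep b = l then 1 else 0 := by
  have hprefix : (List.range (p.length + 1)).map (dheight (p ++ [b]))
      = (List.range (p.length + 1)).map (dheight p) :=
    List.map_congr_left fun i hi =>
      dheight_append_of_le _ (Nat.lt_succ_iff.mp (List.mem_range.mp hi))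
  have hlast : dheight (p ++ [b]) (p.length + 1) = (p.map dstep).sum + dstep b := by
    rw [dheight_of_length_le (by simp)]; simp
  simp only [feet, List.length_append, List.length_singleton, List.range_succ (n := p.length + 1),
    List.map_append, hprefix, List.count_append, List.map_singleton, hlast, List.count_singleton]
  simp [beq_iff_eq]

lemma stepCount_append_singleton (p : List Bool) (c : Bool) (h : ℤ) (b : Bool) :
    stepCount (p ++ [c]) h b
      = stepCount p h b + if (p.map dstep).sum = h ∧ c = b then 1 else 0 := by
  have hprefix : (List.range p.length).countP
        (fun i => dheight (p ++ [c]) i = h ∧ (p ++ [c]).getD i false = b)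
      = stepCount p h b :=
    List.countP_congr fun i hi => by
      have hi := List.mem_range.mp hi
      rw [dheight_append_of_le _ hi.le, List.getD_append _ _ _ _ hi]
  have hlast : dheight (p ++ [c]) p.length = (p.map dstep).sum := by
    rw [dheight_append_of_le _ le_rfl, dheight_of_length_le le_rfl]
  simp only [stepCount, List.length_append, List.length_singleton, List.range_succ,
    List.countP_append, hprefix]
  simp [hlast]

lemma feet_eq_stepCount (p : List Bool) (l : ℤ) :
    feet p l = (if l = 0 then 1 else 0) + stepCount p (l - 1) true + stepCount p (l + 1) false := by
  induction p using List.reverseRecOn with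
  | nil => simp [feet_nil, stepCount_nil]
  | append_singleton p c ih =>
    rw [feet_append_singleton, stepCount_append_singleton, stepCount_append_singleton, ih]
    cases c <;> simp only [dstep_true, dstep_false, Bool.true_eq_false, Bool.false_eq_true,
      and_true, and_false, if_false] <;> grind

lemma stepCount_balance (p : List Bool) (h : ℤ) :
    (stepCount p h true : ℤ) - stepCount p (h + 1) false
      = (if 0 ≤ h ∧ h < (p.map dstep).sum then 1 else 0)
        - (if (p.map dstep).sum ≤ h ∧ h < 0 then 1 else 0) := by
  induction p using List.reverseRecOn with
  | nil => simp [stepCount_nil]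
  | append_singleton p c ih =>
    rw [stepCount_append_singleton, stepCount_append_singleton, List.map_append,
      List.sum_append, List.map_singleton, List.sum_singleton]
    cases c <;> simp only [dstep_true, dstep_false, Bool.true_eq_false, Bool.false_eq_true,
      and_true, and_false, if_false] <;> grind

lemma stepCount_append (s t : List Bool) (h : ℤ) (b : Bool) :
    stepCount (s ++ t) h b = stepCount s h b + stepCount t (h - (s.map dstep).sum) b := by
  induction t using List.reverseRecOn with
  | nil => simp [stepCount_nil]
  | append_singleton t c ih =>
    rw [← List.append_assoc, stepCount_append_singleton, stepCount_append_singleton, ih,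
      List.map_append, List.sum_append]
    grind

lemma stepCount_cons (c : Bool) (p : List Bool) (h : ℤ) (b : Bool) :
    stepCount (c :: p) h b = (if h = 0 ∧ c = b then 1 else 0) + stepCount p (h - dstep c) b := by
  rw [← List.singleton_append, stepCount_append,
    ← List.nil_append [c], stepCount_append_singleton]
  simp [stepCount_nil, eq_comm]

lemma stepCount_eq_zero_of_neg {p : List Bool} (hp : ∀ k, 0 ≤ dheight p k) {h : ℤ} (hh : h < 0)
    (b : Bool) : stepCount p h b = 0 :=
  List.countP_eq_zero.2 fun i _ hi => by
    have := hp i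
    simp only [decide_eq_true_eq] at hi
    omega

lemma IsDyck.stepCount_down {p : List Bool} (hp : IsDyck p) (h : ℤ) :
    stepCount p (h + 1) false = stepCount p h true := by
  have := stepCount_balance p h
  rw [hp.1] at this
  grind

def levelUps (p : List Bool) (k : ℕ) : ℕ := stepCount p k true

def frameOfUps (u : ℕ → ℕ) : ℕ → ℕ
  | 0 => 1 + u 0
  | k + 1 => u k + u (k + 1)

lemma frameOfUps_injective : Function.Injective frameOfUps := by
  intro u v huv
  funext k
  induction k with
  | zero => simpa [frameOfUps] using congrFun huv 0
  | succ k ih =>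
    have := congrFun huv (k + 1)
    simp only [frameOfUps] at this
    omega

lemma IsDyck.frame_eq {p : List Bool} (hp : IsDyck p) : frame p = frameOfUps (levelUps p) := by
  funext k
  simp only [frame, feet_eq_stepCount, hp.stepCount_down]
  cases k with
  | zero =>
    rw [stepCount_eq_zero_of_neg hp.2 (show ((0 : ℕ) : ℤ) - 1 < 0 by norm_num)]
    simp [frameOfUps, levelUps, add_comm]
  | succ k =>
    simp only [frameOfUps, levelUps, Nat.cast_add_one, add_sub_cancel_right]
    rw [if_neg (by omega), zero_add]

lemma IsDyck.two_mul_count_true {p : List Bool} (hp : IsDyck p) : 2 * p.count true = p.length := by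
  have hsum := hp.1
  rw [sum_map_dstep] at hsum
  have := p.count_true_add_count_false
  omega

lemma sum_stepCount_true {p : List Bool} {N : ℕ}
    (hp : ∀ i < p.length, 0 ≤ dheight p i ∧ dheight p i < N) :
    ∑ k ∈ range N, stepCount p k true = p.count true := by
  induction p using List.reverseRecOn with
  | nil => simp [stepCount_nil]
  | append_singleton p c ih =>
    have hprefix : ∀ i < p.length, 0 ≤ dheight p i ∧ dheight p i < N := fun i hi => by
      simpa [dheight_append_of_le _ hi.le] using hp i (by simp; omega)
    obtain ⟨m, hm, hmN⟩ : ∃ m : ℕ, (p.map dstep).sum = m ∧ m < N := by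
      have := hp p.length (by simp)
      rw [dheight_append_of_le _ le_rfl, dheight_of_length_le le_rfl] at this
      exact ⟨(p.map dstep).sum.toNat, by omega, by omega⟩
    simp only [stepCount_append_singleton, Finset.sum_add_distrib, ih hprefix, hm,
      Nat.cast_inj, List.count_append, List.count_singleton]
    cases c <;> simp [hmN]

lemma IsDyck.sum_levelUps {p : List Bool} (hp : IsDyck p) :
    ∑ k ∈ range p.length, levelUps p k = p.count true :=
  sum_stepCount_true fun i hi =>
    ⟨hp.2 i, (dheight_le_self p i).trans_lt (by exact_mod_cast hi)⟩

lemma dheight_le_of_levelUps_eq_zero {p : List Bool} {k : ℕ} (hup : levelUps p k = 0) (i : ℕ) :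
    dheight p i ≤ k := by
  induction i with
  | zero => simp [dheight_zero]
  | succ i ih =>
    by_cases hi : i < p.length
    · have hstep : dheight p i = k → p.getD i false = false := fun hk => by
        have := List.countP_eq_zero.1 hup i (List.mem_range.2 hi)
        simp only [hk, true_and, decide_eq_true_eq] at this
        simpa using this
      rw [dheight_succ hi]
      cases hb : p.getD i false
      · simp only [dstep_false]; omega
      · have hne : dheight p i ≠ k := fun hk => Bool.noConfusion (hb.symm.trans (hstep hk))
        simp only [dstep_true]; omega
    · rwa [dheight_of_length_le (show p.length ≤ i + 1 by omega),
        ← dheight_of_length_le (show p.length ≤ i by omega)]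

lemma levelUps_succ_eq_zero {p : List Bool} {k : ℕ} (hup : levelUps p k = 0) :
    levelUps p (k + 1) = 0 :=
  List.countP_eq_zero.2 fun i _ hi => by
    have := dheight_le_of_levelUps_eq_zero hup i
    simp only [decide_eq_true_eq] at hi
    omega

lemma levelUps_eq_zero_of_length_le {p : List Bool} {k : ℕ} (hk : p.length ≤ k) :
    levelUps p k = 0 :=
  List.countP_eq_zero.2 fun i hi hup => by
    have := dheight_le_self p i
    simp only [List.mem_range] at hi
    simp only [decide_eq_true_eq] at hup
    omega

namespace Composition

def paddedBlocks {n : ℕ} (c : Composition n) (k : ℕ) : ℕ := c.blocks.getD k 0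

lemma paddedBlocks_pos_iff {n : ℕ} (c : Composition n) (k : ℕ) :
    0 < c.paddedBlocks k ↔ k < c.length := by
  by_cases hk : k < c.length
  · simp [paddedBlocks, hk, c.blocks_pos (List.getElem_mem hk)]
  · simp [paddedBlocks, hk]

lemma paddedBlocks_injective {n : ℕ} : Function.Injective (paddedBlocks (n := n)) := by
  intro c d h
  have hlen : c.blocks.length = d.blocks.length :=
    eq_of_forall_lt_iff fun k => by
      rw [← c.paddedBlocks_pos_iff, ← d.paddedBlocks_pos_iff, h]
  refine Composition.ext (List.ext_getElem hlen fun k hc hd => ?_)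
  simpa only [paddedBlocks, List.getD_eq_getElem _ _ hc, List.getD_eq_getElem _ _ hd]
    using congrFun h k

lemma exists_paddedBlocks_eq {u : ℕ → ℕ} {N n : ℕ} (hzero : ∀ k, u k = 0 → u (k + 1) = 0)
    (hN : ∀ k, N ≤ k → u k = 0) (hsum : ∑ k ∈ range N, u k = n) :
    ∃ c : Composition n, c.paddedBlocks = u := by
  have hex : ∃ m, u m = 0 := ⟨N, hN N le_rfl⟩
  have hpos : ∀ k < Nat.find hex, 0 < u k := fun k hk => Nat.pos_of_ne_zero (Nat.find_min hex hk)
  have hvanish : ∀ k, Nat.find hex ≤ k → u k = 0 := fun k hk => by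
    induction k, hk using Nat.le_induction with
    | base => exact Nat.find_spec hex
    | succ k _ ih => exact hzero k ih
  have hmN : Nat.find hex ≤ N := Nat.find_min' hex (hN N le_rfl)
  refine ⟨⟨(List.range (Nat.find hex)).map u, ?_, ?_⟩, ?_⟩
  · simp only [List.mem_map, List.mem_range]
    rintro _ ⟨k, hk, rfl⟩
    exact hpos k hk
  · rw [← hsum, ← Finset.sum_range_add_sum_Ico _ hmN,
      Finset.sum_eq_zero fun k hk => hvanish k (Finset.mem_Ico.1 hk).1, add_zero,
      Finset.sum_eq_multiset_sum]
    rfl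
  · funext k
    by_cases hk : k < Nat.find hex
    · simp [paddedBlocks, hk]
    · simp [paddedBlocks, hk, hvanish k (not_lt.1 hk)]

end Composition

lemma IsDyck.exists_paddedBlocks_eq_levelUps {p : List Bool} {n : ℕ} (hp : IsDyck p)
    (hlen : p.length = 2 * n) : ∃ c : Composition n, c.paddedBlocks = levelUps p :=
  Composition.exists_paddedBlocks_eq (fun _ => levelUps_succ_eq_zero)
    (fun _ => levelUps_eq_zero_of_length_le)
    (by have := hp.two_mul_count_true; rw [hp.sum_levelUps]; omega)

lemma isDyck_nil : IsDyck [] := ⟨rfl, fun k => by simp [dheight]⟩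

lemma IsDyck.append {s t : List Bool} (hs : IsDyck s) (ht : IsDyck t) : IsDyck (s ++ t) :=
  ⟨by simp [hs.1, ht.1], fun k => by rw [dheight_append]; exact add_nonneg (hs.2 k) (ht.2 _)⟩

lemma IsDyck.elevate {q : List Bool} (hq : IsDyck q) : IsDyck (true :: q ++ [false]) := by
  refine ⟨by simp [hq.1], fun k => ?_⟩
  cases k with
  | zero => simp [dheight_zero]
  | succ k =>
    rw [List.cons_append, dheight_cons_succ, dstep_true]
    rcases le_or_gt k q.length with hk | hk
    · rw [dheight_append_of_le _ hk]
      linarith [hq.2 k]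
    · rw [dheight_of_length_le (by simp; omega)]
      simp [hq.1]

def peaks : ℕ → List Bool
  | 0 => []
  | m + 1 => true :: false :: peaks m

lemma length_peaks (m : ℕ) : (peaks m).length = 2 * m := by
  induction m with
  | zero => rfl
  | succ m ih => simp [peaks, ih]; ring

lemma isDyck_peaks (m : ℕ) : IsDyck (peaks m) := by
  induction m with
  | zero => exact isDyck_nil
  | succ m ih => exact isDyck_nil.elevate.append ih

lemma stepCount_peaks_true (m : ℕ) (h : ℤ) :
    stepCount (peaks m) h true = if h = 0 then m else 0 := by
  induction m with
  | zero => simp [peaks, stepCount_nil]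
  | succ m ih => simp only [peaks, stepCount_cons, dstep_true, dstep_false]; grind

def pathOfBlocks : List ℕ → List Bool
  | [] => []
  | a :: t => (true :: pathOfBlocks t ++ [false]) ++ peaks (a - 1)

lemma isDyck_pathOfBlocks (l : List ℕ) : IsDyck (pathOfBlocks l) := by
  induction l with
  | nil => exact isDyck_nil
  | cons a t ih => exact ih.elevate.append (isDyck_peaks _)

lemma length_pathOfBlocks {l : List ℕ} (hl : ∀ x ∈ l, 0 < x) :
    (pathOfBlocks l).length = 2 * l.sum := by
  induction l with
  | nil => rfl
  | cons a t ih =>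
    have ha := hl a (by simp)
    simp [pathOfBlocks, length_peaks, ih fun x hx => hl x (by simp [hx])]
    omega

lemma levelUps_pathOfBlocks {l : List ℕ} (hl : ∀ x ∈ l, 0 < x) :
    levelUps (pathOfBlocks l) = fun k => l.getD k 0 := by
  induction l with
  | nil => rfl
  | cons a t ih =>
    funext k
    have ha := hl a (by simp)
    have hsum := (isDyck_pathOfBlocks t).elevate.1
    rw [levelUps, pathOfBlocks, stepCount_append, hsum, sub_zero, stepCount_append_singleton,
      stepCount_cons, stepCount_peaks_true, dstep_true]
    cases k with
    | zero =>
      rw [stepCount_eq_zero_of_neg (isDyck_pathOfBlocks t).2 (by norm_num)]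
      simp only [Nat.cast_zero, Bool.false_eq_true, and_false, if_false, true_and, if_true,
        List.getD_cons_zero]
      omega
    | succ k =>
      have := congrFun (ih fun x hx => hl x (by simp [hx])) k
      rw [levelUps] at this
      push_cast
      rw [add_sub_cancel_right, this, List.getD_cons_succ]
      simp only [and_false, if_false]
      rw [if_neg (by omega), if_neg (by omega)]
      omega

lemma Composition.exists_isDyck_levelUps_eq {n : ℕ} (c : Composition n) :
    ∃ p : List Bool, p.length = 2 * n ∧ IsDyck p ∧ levelUps p = c.paddedBlocks :=
  ⟨pathOfBlocks c.blocks,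
    by rw [length_pathOfBlocks fun _ => c.blocks_pos, c.blocks_sum],
    isDyck_pathOfBlocks _, levelUps_pathOfBlocks fun _ => c.blocks_pos⟩

theorem stmt8_general (n : ℕ) :
    Set.ncard {I : ℕ → ℕ | ∃ p : List Bool, p.length = 2 * n ∧ IsDyck p ∧ frame p = I} =
      2 ^ (n - 1) := by
  have hframes : {I : ℕ → ℕ | ∃ p : List Bool, p.length = 2 * n ∧ IsDyck p ∧ frame p = I}
      = frameOfUps '' Set.range (Composition.paddedBlocks (n := n)) := by
    ext I
    simp only [Set.mem_ofPred_eq, Set.mem_image, Set.exists_range_iff]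
    constructor
    · rintro ⟨p, hlen, hp, rfl⟩
      obtain ⟨c, hc⟩ := hp.exists_paddedBlocks_eq_levelUps hlen
      exact ⟨c, by rw [hc, hp.frame_eq]⟩
    · rintro ⟨c, rfl⟩
      obtain ⟨p, hlen, hp, hc⟩ := c.exists_isDyck_levelUps_eq
      exact ⟨p, hlen, hp, by rw [hp.frame_eq, hc]⟩
  rw [hframes, Set.ncard_image_of_injective _ frameOfUps_injective,
    Set.ncard_range_of_injective Composition.paddedBlocks_injective, Nat.card_eq_fintype_card,
    composition_card]

/-- The number of distinct frames of Dyck paths of length 2n is 2^(n-1). -/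
theorem stmt8 (n : ℕ) (hn : 1 ≤ n) :
    Set.ncard {I : ℕ → ℕ | ∃ p : List Bool, p.length = 2 * n ∧ IsDyck p ∧ frame p = I} =
      2 ^ (n - 1) :=
  stmt8_general n
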